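/- Let G be a finite minimal non-abelian p-group with exp(G) ≤ p² and with cyclic Frattini subgroup Φ(G). Then |G| = p³. -/

import Mathlib

/-- A subgroup is minimal non-abelian if it is non-abelian and all its proper
subgroups are abelian. -/
def IsMinNonab (G : Type*) [Group G] (H : Subgroup G) : Prop :=
  ¬ IsMulCommutative H ∧ ∀ K : Subgroup G, K < H → IsMulCommutative K

/-!
In a minimal non-abelian group the centralizers of two non-commuting elements are maximal
subgroups meeting in the centre, while a maximal subgroup missing a central element would
generate an abelian group together with the centre; hence `Φ(G) = Z(G)`, and for a `p`-group
`|G : Z(G)| ≤ p²`. As `G'G^p ≤ Φ(G)` is central, `[x, y]^p = [x^p, y] = 1`, and `exp G ≤ p²`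
gives `(x^p)^p = 1`, so `G'G^p` lies in the subgroup `Ω₁(Z(G))` of central elements of order
dividing `p`. Any subgroup containing `G'G^p` contains `Φ(G)`, so the cyclic group
`Z(G) = Φ(G)` has exponent `p`, hence order `p`, and `|G| ≤ p³`. Groups of order at most `p²`
are abelian, so `|G| = p³`.
-/

open Subgroup
open scoped commutatorElement

section

variable {G : Type*} [Group G]

theorem commutatorElement_pow_left_of_commute {x y : G} (h : Commute x ⁅x, y⁆) (n : ℕ) :
    ⁅x ^ n, y⁆ = ⁅x, y⁆ ^ n := by
  induction n with
  | zero => simp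
  | succ n ih =>
    calc ⁅x ^ (n + 1), y⁆ = x * ⁅x ^ n, y⁆ * x⁻¹ * ⁅x, y⁆ := by
          simp only [commutatorElement_def]; group
      _ = ⁅x, y⁆ ^ (n + 1) := by
          rw [ih, (h.pow_right n).eq, pow_succ]; group

theorem Subgroup.mem_of_zpow_mem_of_isCoprime {K : Subgroup G} {x : G} {m n : ℤ}
    (hmn : IsCoprime m n) (hm : x ^ m ∈ K) (hn : x ^ n ∈ K) : x ∈ K := by
  obtain ⟨u, v, huv⟩ := hmn
  have hx : x = (x ^ m) ^ u * (x ^ n) ^ v := by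
    rw [← zpow_mul, ← zpow_mul, ← zpow_add, mul_comm m, mul_comm n, huv, zpow_one]
  rw [hx]
  exact K.mul_mem (K.zpow_mem hm u) (K.zpow_mem hn v)

theorem mem_frattini_iff {x : G} :
    x ∈ frattini G ↔ ∀ M : Subgroup G, IsCoatom M → x ∈ M := by
  simp [frattini, Order.radical, mem_iInf]

theorem Subgroup.exists_mem_mul_zpow_of_mem_sup_zpowers {H : Subgroup G} [H.Normal] {x z : G}
    (hz : z ∈ H ⊔ zpowers x) : ∃ h ∈ H, ∃ k : ℤ, z = h * x ^ k := by
  rw [← SetLike.mem_coe, normal_mul, Set.mem_mul] at hz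
  obtain ⟨h, hh, _, ⟨k, rfl⟩, rfl⟩ := hz
  exact ⟨h, hh, k, rfl⟩

theorem frattini_le_of_commutator_le_of_pow_mem [Finite G] {p : ℕ} (hp : p.Prime)
    {H : Subgroup G} (hcomm : commutator G ≤ H) (hpow : ∀ x : G, x ^ p ∈ H) :
    frattini G ≤ H := by
  intro z hzΦ
  by_contra hzH
  obtain ⟨M, hHM, hM⟩ := Finite.exists_le_maximal (p := fun K : Subgroup G ↦ z ∉ K) hzH
  have : M.Normal := commutator_top_left_le_iff.mp <|
    (commutator_mono le_rfl le_top).trans (hcomm.trans hHM)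
  suffices IsCoatom M from hM.prop (frattini_le_coatom this hzΦ)
  refine ⟨fun h ↦ hM.prop (h ▸ mem_top z), fun K hMK ↦ eq_top_iff.mpr fun x _ ↦ ?_⟩
  have hzK : z ∈ K := by_contra fun hzK ↦ hMK.not_ge (hM.2 hzK hMK.le)
  by_cases hxM : x ∈ M
  · exact hMK.le hxM
  -- `z = h * x ^ k` with `h ∈ M`; `p ∤ k` as `x ^ p ∈ M ∌ z`, so `x ∈ ⟨x ^ p, x ^ k⟩ ≤ K`
  have hzMx : z ∈ M ⊔ zpowers x := by_contra fun h ↦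
    hxM (hM.2 h le_sup_left (mem_sup_right (mem_zpowers x)))
  obtain ⟨h, hhM, k, rfl⟩ := exists_mem_mul_zpow_of_mem_sup_zpowers hzMx
  have hxpM : x ^ (p : ℤ) ∈ M := by simpa using hHM (hpow x)
  have hk : IsCoprime (p : ℤ) k := by
    refine (Nat.prime_iff_prime_int.mp hp).coprime_iff_not_dvd.mpr fun ⟨t, ht⟩ ↦ hM.prop ?_
    rw [ht, zpow_mul]
    exact M.mul_mem hhM (M.zpow_mem hxpM t)
  refine mem_of_zpow_mem_of_isCoprime hk (hMK.le hxpM) ?_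
  simpa using K.mul_mem (K.inv_mem (hMK.le hhM)) hzK

end

namespace IsPGroup

variable {p : ℕ} [Fact p.Prime] {G : Type*} [Group G] [Finite G] (hG : IsPGroup p G)
include hG

theorem index_eq_of_isCoatom {M : Subgroup G} (hM : IsCoatom M) : M.index = p := by
  have hp := (Fact.out : p.Prime)
  obtain ⟨m, hm⟩ := (hG.to_subgroup M).exists_card_eq
  obtain ⟨j, hj⟩ := hG.index M
  have hj0 : j ≠ 0 := by
    rintro rfl
    exact hM.1 (index_eq_one.mp hj)
  have hcard : Nat.card G = p ^ m * p ^ j := by rw [← hm, ← hj, card_mul_index]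
  obtain ⟨K, hK, hMK⟩ := Sylow.exists_subgroup_card_pow_succ
    (hcard ▸ mul_dvd_mul_left _ (dvd_pow_self p hj0)) hm
  have hKM : K ≠ M := by
    rintro rfl
    exact (Nat.pow_right_injective hp.two_le).ne (Nat.succ_ne_self m) (hK.symm.trans hm)
  rw [hM.2 K (hMK.lt_of_ne hKM.symm), card_top, hcard, pow_succ] at hK
  rw [hj]
  exact Nat.eq_of_mul_eq_mul_left (pow_pos hp.pos m) hK

theorem normal_of_isCoatom {M : Subgroup G} (hM : IsCoatom M) : M.Normal :=
  have := hG.isNilpotent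
  NormalizerCondition.normal_of_coatom M Group.normalizerCondition_of_isNilpotent hM

theorem pow_mem_frattini (x : G) : x ^ p ∈ frattini G :=
  mem_frattini_iff.mpr fun M hM ↦
    have := hG.normal_of_isCoatom hM
    hG.index_eq_of_isCoatom hM ▸ pow_index_mem M x

theorem commutator_le_frattini : commutator G ≤ frattini G := by
  refine le_iInf₂ fun M hM ↦ ?_
  have := hG.normal_of_isCoatom hM
  have : IsCyclic (G ⧸ M) := isCyclic_of_prime_card (hG.index_eq_of_isCoatom hM)
  exact Normal.quotient_commutative_iff_commutator_le.mp inferInstance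

theorem isMulCommutative_of_card_le_sq (hcard : Nat.card G ≤ p ^ 2) : IsMulCommutative G := by
  obtain ⟨n, hn⟩ := hG.exists_card_eq
  have : n ≤ 2 := (Nat.pow_le_pow_iff_right (Fact.out : p.Prime).one_lt).mp (hn ▸ hcard)
  interval_cases n
  · have : Subsingleton G := (Nat.card_eq_one_iff_unique.mp (by simpa using hn)).1
    exact ⟨⟨fun _ _ ↦ Subsingleton.elim _ _⟩⟩
  · have := isCyclic_of_prime_card (by simpa using hn)
    infer_instance
  · exact isMulCommutative_of_card_eq_prime_sq hn

theorem pow_three_le_card_of_not_commute {a b : G} (hab : ¬ Commute a b) :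
    p ^ 3 ≤ Nat.card G := by
  have hp := (Fact.out : p.Prime)
  obtain ⟨n, hn⟩ := hG.exists_card_eq
  by_contra! h
  rw [hn, Nat.pow_lt_pow_iff_right hp.one_lt] at h
  have := hG.isMulCommutative_of_card_le_sq (hn ▸ Nat.pow_le_pow_right hp.pos (by omega))
  exact hab (mul_comm' a b)

theorem exponent_dvd_of_le {k : ℕ} (hk : Monoid.exponent G ≤ p ^ k) :
    Monoid.exponent G ∣ p ^ k := by
  obtain ⟨n, hn⟩ := isPGroup_iff_exponent_eq_pow.mp hG
  rw [hn] at hk ⊢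
  exact pow_dvd_pow p ((Nat.pow_le_pow_iff_right (Fact.out : p.Prime).one_lt).mp hk)

end IsPGroup

def omegaOneCenter (G : Type*) [Group G] (p : ℕ) : Subgroup G where
  carrier := {z | z ∈ center G ∧ z ^ p = 1}
  one_mem' := ⟨one_mem _, one_pow p⟩
  mul_mem' {a b} := fun ⟨ha, hap⟩ ⟨hb, hbp⟩ ↦
    ⟨mul_mem ha hb, by
      rw [Commute.mul_pow (mem_center_iff.mp hb a), hap, hbp, one_mul]⟩
  inv_mem' := fun ⟨ha, hap⟩ ↦ ⟨inv_mem ha, by rw [inv_pow, hap, inv_one]⟩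

namespace IsMinNonab

variable {G : Type*} [Group G] (hmin : IsMinNonab G ⊤)
include hmin

theorem isMulCommutative_of_ne_top {K : Subgroup G} (hK : K ≠ ⊤) : IsMulCommutative K :=
  hmin.2 K hK.lt_top

theorem exists_not_commute : ∃ a b : G, ¬ Commute a b := by
  by_contra! h
  exact hmin.1 ⟨⟨fun x y ↦ Subtype.ext (h x y).eq⟩⟩

theorem isCoatom_centralizer {a b : G} (hab : ¬ Commute a b) : IsCoatom (centralizer {a}) := by
  refine ⟨fun h ↦ hab (mem_centralizer_singleton_iff.mp (h ▸ mem_top b)).symm,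
    fun K hK ↦ by_contra fun hKtop ↦ hK.not_ge ?_⟩
  have := hmin.isMulCommutative_of_ne_top hKtop
  have haK : a ∈ K := hK.le (mem_centralizer_singleton_iff.mpr rfl)
  exact fun y hy ↦ mem_centralizer_singleton_iff.mpr (setLike_mul_comm hy haK)

theorem centralizer_inf_centralizer_eq_center {a b : G} (hab : ¬ Commute a b) :
    centralizer {a} ⊓ centralizer {b} = center G := by
  have hgen : closure ({a, b} : Set G) = ⊤ := by
    by_contra h
    have := hmin.isMulCommutative_of_ne_top h
    exact hab (setLike_mul_comm (s := closure ({a, b} : Set G))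
      (subset_closure (Set.mem_insert a _)) (subset_closure (Set.mem_insert_of_mem a rfl)))
  rw [center_eq_iInf hgen, iInf_insert, iInf_singleton]

theorem frattini_le_center : frattini G ≤ center G := by
  obtain ⟨a, b, hab⟩ := hmin.exists_not_commute
  rw [← hmin.centralizer_inf_centralizer_eq_center hab]
  exact le_inf (frattini_le_coatom (hmin.isCoatom_centralizer hab))
    (frattini_le_coatom (hmin.isCoatom_centralizer (hab ·.symm)))

theorem center_le_frattini : center G ≤ frattini G := by
  refine le_iInf₂ fun M hM ↦ by_contra fun hZM ↦ ?_
  obtain ⟨a, b, hab⟩ := hmin.exists_not_commute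
  have := hmin.isMulCommutative_of_ne_top hM.1
  have hcomm : IsMulCommutative (closure (M ∪ center G : Set G)) := by
    refine isMulCommutative_closure ?_
    rintro x (hx | hx) y (hy | hy)
    · exact setLike_mul_comm hx hy
    · exact mem_center_iff.mp hy x
    all_goals exact (mem_center_iff.mp hx y).symm
  have htop : closure (M ∪ center G : Set G) = ⊤ := by
    rw [Subgroup.closure_union, closure_eq, closure_eq]
    exact hM.2 _ (left_lt_sup.mpr hZM)
  rw [htop] at hcomm
  exact hab (setLike_mul_comm (mem_top a) (mem_top b))

theorem frattini_eq_center : frattini G = center G :=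
  le_antisymm hmin.frattini_le_center hmin.center_le_frattini

variable {p : ℕ} [Fact p.Prime] [Finite G] (hG : IsPGroup p G)
include hG

theorem index_center_le_sq : (center G).index ≤ p ^ 2 := by
  obtain ⟨a, b, hab⟩ := hmin.exists_not_commute
  rw [← hmin.centralizer_inf_centralizer_eq_center hab, sq]
  refine index_inf_le.trans_eq ?_
  rw [hG.index_eq_of_isCoatom (hmin.isCoatom_centralizer hab),
    hG.index_eq_of_isCoatom (hmin.isCoatom_centralizer (hab ·.symm))]

theorem pow_eq_one_of_mem_center (hexp : Monoid.exponent G ∣ p ^ 2) {z : G}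
    (hz : z ∈ center G) : z ^ p = 1 := by
  have hΦ := hmin.frattini_eq_center
  have hpow (x : G) : x ^ p ∈ center G := hΦ ▸ hG.pow_mem_frattini x
  have hcomm : commutator G ≤ center G := hΦ ▸ hG.commutator_le_frattini
  suffices frattini G ≤ omegaOneCenter G p from (this (hΦ ▸ hz)).2
  refine frattini_le_of_commutator_le_of_pow_mem Fact.out
    (commutator_le.mpr fun x _ y _ ↦ ⟨?_, ?_⟩) fun x ↦ ⟨hpow x, ?_⟩
  · exact hcomm (commutator_mem_commutator (mem_top x) (mem_top y))
  · have hc : Commute x ⁅x, y⁆ :=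
      mem_center_iff.mp (hcomm (commutator_mem_commutator (mem_top x) (mem_top y))) x
    rw [← commutatorElement_pow_left_of_commute hc, commutatorElement_eq_one_iff_commute]
    exact (mem_center_iff.mp (hpow x) y).symm
  · rw [← pow_mul, ← sq]
    exact Monoid.exponent_dvd_iff_forall_pow_eq_one.mp hexp x

end IsMinNonab

/-- A finite minimal non-abelian `p`-group with exponent at most `p²` and cyclic
Frattini subgroup has order `p³`. -/
theorem stmt10 {G : Type*} [Group G] [Finite G] (p : ℕ) (hp : p.Prime)
    (hG : IsPGroup p G) (hmin : IsMinNonab G ⊤)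
    (hexp : Monoid.exponent G ≤ p ^ 2)
    (hfr : IsCyclic ↥(frattini G)) :
    Nat.card G = p ^ 3 := by
  have : Fact p.Prime := ⟨hp⟩
  obtain ⟨a, b, hab⟩ := hmin.exists_not_commute
  have hcard_center : Nat.card (center G) ≤ p := by
    have : IsCyclic (center G) := hmin.frattini_eq_center ▸ hfr
    rw [← IsCyclic.exponent_eq_card]
    refine Nat.le_of_dvd hp.pos (Monoid.exponent_dvd_of_forall_pow_eq_one fun z ↦ ?_)
    exact Subtype.ext (hmin.pow_eq_one_of_mem_center hG (hG.exponent_dvd_of_le hexp) z.2)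
  have hle : Nat.card G ≤ p ^ 3 := by
    rw [← card_mul_index (center G), pow_succ']
    exact Nat.mul_le_mul hcard_center (hmin.index_center_le_sq hG)
  exact hle.antisymm (hG.pow_three_le_card_of_not_commute hab)
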